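/- arXiv:1410.7316 — 2 statements merged into one kernel-verified Lean document; each statement's English description precedes it below -/
import Mathlib

section
/- Let t > 0 and let f : ℝ → ℝ be bounded and continuous. Then the expectation of f under the Gamma distribution with shape n and rate n/t converges to f(t) as n → ∞, i.e., lim_{n→∞} ∫ f(x) dΓ(n, n/t)(x) = f(t). -/
/-!
The Gamma densities satisfy `x · p_{a,r}(x) = (a / r) · p_{a+1,r}(x)`, which gives mean `a / r`
and variance `a / r²` for `Γ(a, r)`. For `Γ(n, n/t)` these are `t` and `t² / n`, so by Chebyshev
the mass of `{|x - t| ≥ δ}` tends to `0`. If `|f| ≤ C` and `|f x - f t| ≤ ε` on `|x - t| < δ`,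
the integral of `f` is within `ε + 2C · μ{|x - t| ≥ δ}` of `f t`.
-/

open MeasureTheory ProbabilityTheory Filter Topology

section Concentration

variable {α : Type*} [PseudoMetricSpace α] [MeasurableSpace α] [OpensMeasurableSpace α]
  {f : α → ℝ} {x₀ : α} {C : ℝ}

lemma abs_integral_sub_le (μ : Measure α) [IsProbabilityMeasure μ] (hf : Measurable f)
    (hC : ∀ x, |f x| ≤ C) {ε δ : ℝ} (hε₀ : 0 ≤ ε) (hε : ∀ x, dist x x₀ < δ → |f x - f x₀| ≤ ε) :
    |∫ x, f x ∂μ - f x₀| ≤ ε + 2 * C * μ.real {x | δ ≤ dist x x₀} := by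
  set S := {x | δ ≤ dist x x₀}
  have hS : MeasurableSet S :=
    (isClosed_le continuous_const (continuous_id.dist continuous_const)).measurableSet
  have hfi : Integrable f μ := (integrable_const C).mono' hf.aestronglyMeasurable (ae_of_all _ hC)
  have hgi : Integrable (fun x => ε + S.indicator (fun _ => 2 * C) x) μ :=
    (integrable_const _).add ((integrable_const _).indicator hS)
  have hbound : ∀ x, |f x - f x₀| ≤ ε + S.indicator (fun _ => 2 * C) x := by
    intro x
    by_cases hx : x ∈ S
    · rw [Set.indicator_of_mem hx]
      linarith [abs_sub (f x) (f x₀), hC x, hC x₀]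
    · rw [Set.indicator_of_notMem hx, add_zero]
      exact hε x (not_le.1 hx)
  calc |∫ x, f x ∂μ - f x₀| = |∫ x, (f x - f x₀) ∂μ| := by
        rw [integral_sub hfi (integrable_const _), integral_const, probReal_univ, one_smul]
    _ ≤ ∫ x, |f x - f x₀| ∂μ := abs_integral_le_integral_abs
    _ ≤ ∫ x, (ε + S.indicator (fun _ => 2 * C) x) ∂μ :=
        integral_mono (hfi.sub (integrable_const _)).abs hgi hbound
    _ = ε + 2 * C * μ.real S := by
        rw [integral_add (integrable_const _) ((integrable_const _).indicator hS), integral_const,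
          integral_indicator_const _ hS, probReal_univ, one_smul, smul_eq_mul, mul_comm]

lemma tendsto_integral_of_tendsto_measure_le_dist {ι : Type*} {l : Filter ι} {μ : ι → Measure α}
    [∀ i, IsProbabilityMeasure (μ i)]
    (hμ : ∀ δ > 0, Tendsto (fun i => μ i {x | δ ≤ dist x x₀}) l (𝓝 0))
    (hf : Measurable f) (hfx₀ : ContinuousAt f x₀) (hC : ∀ x, |f x| ≤ C) :
    Tendsto (fun i => ∫ x, f x ∂μ i) l (𝓝 (f x₀)) := by
  rw [Metric.tendsto_nhds]
  intro ε hε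
  obtain ⟨δ, hδ, hfδ⟩ := Metric.continuousAt_iff.1 hfx₀ (ε / 2) (half_pos hε)
  have hfar : Tendsto (fun i => 2 * C * (μ i).real {x | δ ≤ dist x x₀}) l (𝓝 0) := by
    simpa [Measure.real] using
      ((ENNReal.tendsto_toReal ENNReal.zero_ne_top).comp (hμ δ hδ)).const_mul (2 * C)
  filter_upwards [hfar.eventually (gt_mem_nhds (half_pos hε))] with i hi
  rw [Real.dist_eq]
  calc _ ≤ ε / 2 + 2 * C * (μ i).real {x | δ ≤ dist x x₀} :=
        abs_integral_sub_le (μ i) hf hC (half_pos hε).le fun x hx => (hfδ hx).le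
    _ < ε := by linarith

end Concentration

section GammaMeasure

variable {a r : ℝ}

open Real in
lemma mul_gammaPDFReal (ha : 0 < a) (hr : 0 < r) (x : ℝ) :
    x * gammaPDFReal a r x = a / r * gammaPDFReal (a + 1) r x := by
  unfold gammaPDFReal
  split_ifs with hx
  · rw [add_sub_cancel_right, Gamma_add_one ha.ne', rpow_add_one hr.ne',
      ← sub_add_cancel a 1, rpow_add_one' hx (by simpa using ha.ne'), sub_add_cancel]
    field_simp
  · simp

lemma toReal_gammaPDF (ha : 0 < a) (hr : 0 < r) (x : ℝ) :
    (gammaPDF a r x).toReal = gammaPDFReal a r x :=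
  ENNReal.toReal_ofReal (gammaPDFReal_nonneg ha hr x)

lemma measurable_gammaPDF (a r : ℝ) : Measurable (gammaPDF a r) :=
  (measurable_gammaPDFReal a r).ennreal_ofReal

lemma integral_gammaMeasure (ha : 0 < a) (hr : 0 < r) (g : ℝ → ℝ) :
    ∫ x, g x ∂gammaMeasure a r = ∫ x, gammaPDFReal a r x * g x := by
  simp only [gammaMeasure, integral_withDensity_eq_integral_toReal_smul (measurable_gammaPDF a r)
    (ae_of_all _ fun _ => ENNReal.ofReal_lt_top), toReal_gammaPDF ha hr, smul_eq_mul]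

lemma integrable_gammaMeasure_iff (ha : 0 < a) (hr : 0 < r) {g : ℝ → ℝ} :
    Integrable g (gammaMeasure a r) ↔ Integrable (fun x => gammaPDFReal a r x * g x) := by
  simp only [gammaMeasure, integrable_withDensity_iff_integrable_smul' (measurable_gammaPDF a r)
    (ae_of_all _ fun _ => ENNReal.ofReal_lt_top), toReal_gammaPDF ha hr, smul_eq_mul]

lemma gammaPDFReal_mul_mul (ha : 0 < a) (hr : 0 < r) (g : ℝ → ℝ) (x : ℝ) :
    gammaPDFReal a r x * (x * g x) = a / r * (gammaPDFReal (a + 1) r x * g x) := by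
  rw [mul_left_comm, ← mul_assoc, mul_gammaPDFReal ha hr, mul_assoc]

lemma integral_mul_gammaMeasure (ha : 0 < a) (hr : 0 < r) (g : ℝ → ℝ) :
    ∫ x, x * g x ∂gammaMeasure a r = a / r * ∫ x, g x ∂gammaMeasure (a + 1) r := by
  simp only [integral_gammaMeasure ha hr, integral_gammaMeasure (by positivity : 0 < a + 1) hr,
    gammaPDFReal_mul_mul ha hr, integral_const_mul]

lemma MeasureTheory.Integrable.id_mul_gammaMeasure (ha : 0 < a) (hr : 0 < r) {g : ℝ → ℝ}
    (hg : Integrable g (gammaMeasure (a + 1) r)) :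
    Integrable (fun x => x * g x) (gammaMeasure a r) := by
  rw [integrable_gammaMeasure_iff (by positivity) hr] at hg
  simpa only [integrable_gammaMeasure_iff ha hr, gammaPDFReal_mul_mul ha hr] using hg.const_mul _

lemma integral_id_gammaMeasure (ha : 0 < a) (hr : 0 < r) :
    ∫ x, x ∂gammaMeasure a r = a / r := by
  have := isProbabilityMeasure_gammaMeasure (by positivity : 0 < a + 1) hr
  simpa using integral_mul_gammaMeasure ha hr 1

lemma integrable_sq_gammaMeasure (ha : 0 < a) (hr : 0 < r) :
    Integrable (fun x => x ^ 2) (gammaMeasure a r) := by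
  have := isProbabilityMeasure_gammaMeasure (by positivity : 0 < a + 1 + 1) hr
  have h1 : Integrable (fun x => x * 1) (gammaMeasure (a + 1) r) :=
    (integrable_const (1 : ℝ)).id_mul_gammaMeasure (by positivity) hr
  simpa only [mul_one, sq] using h1.id_mul_gammaMeasure ha hr

lemma memLp_id_gammaMeasure (ha : 0 < a) (hr : 0 < r) : MemLp id 2 (gammaMeasure a r) :=
  (memLp_two_iff_integrable_sq aestronglyMeasurable_id).2 (integrable_sq_gammaMeasure ha hr)

lemma variance_id_gammaMeasure (ha : 0 < a) (hr : 0 < r) :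
    variance id (gammaMeasure a r) = a / r ^ 2 := by
  have := isProbabilityMeasure_gammaMeasure ha hr
  have h2 : ∫ x, x ^ 2 ∂gammaMeasure a r = a / r * ((a + 1) / r) := by
    rw [← integral_id_gammaMeasure (by positivity : 0 < a + 1) hr,
      ← integral_mul_gammaMeasure ha hr fun x => x]
    simp only [sq]
  rw [variance_eq_sub (memLp_id_gammaMeasure ha hr)]
  simp only [id, Pi.pow_apply, h2, integral_id_gammaMeasure ha hr]
  field_simp
  ring

lemma gammaMeasure_ge_le_div_sq (ha : 0 < a) (hr : 0 < r) {δ : ℝ} (hδ : 0 < δ) :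
    gammaMeasure a r {x | δ ≤ |x - a / r|} ≤ ENNReal.ofReal (a / r ^ 2 / δ ^ 2) := by
  have := isProbabilityMeasure_gammaMeasure ha hr
  simpa [variance_id_gammaMeasure ha hr, integral_id_gammaMeasure ha hr] using
    meas_ge_le_variance_div_sq (memLp_id_gammaMeasure ha hr) hδ

end GammaMeasure

lemma tendsto_gammaMeasure_le_dist {t δ : ℝ} (ht : 0 < t) (hδ : 0 < δ) :
    Tendsto (fun n : ℕ => gammaMeasure (n + 1 : ℕ) ((n + 1 : ℕ) / t) {x | δ ≤ dist x t})
      atTop (𝓝 0) := by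
  have hbound : Tendsto (fun n : ℕ => ENNReal.ofReal (t ^ 2 / δ ^ 2 * (1 / ((n : ℝ) + 1))))
      atTop (𝓝 0) := by
    simpa using ENNReal.tendsto_ofReal
      (tendsto_one_div_add_atTop_nhds_zero_nat.const_mul (t ^ 2 / δ ^ 2))
  refine tendsto_of_tendsto_of_tendsto_of_le_of_le tendsto_const_nhds hbound (fun _ => bot_le)
    fun n => ?_
  have hn : (0 : ℝ) < (n + 1 : ℕ) := Nat.cast_pos.2 n.succ_pos
  have hmean : ((n + 1 : ℕ) : ℝ) / ((n + 1 : ℕ) / t) = t := by field_simp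
  have hvar : ((n + 1 : ℕ) : ℝ) / ((n + 1 : ℕ) / t) ^ 2 / δ ^ 2 =
      t ^ 2 / δ ^ 2 * (1 / ((n : ℝ) + 1)) := by
    push_cast
    field_simp
  simpa only [Real.dist_eq, hmean, hvar] using gammaMeasure_ge_le_div_sq hn (div_pos hn ht) hδ

/-- For `t > 0` and a bounded continuous function `f : ℝ → ℝ`, the expectation of `f` under
the Gamma distribution with shape `n` and rate `n / t` converges to `f t` as `n → ∞`. -/
theorem gamma_randomisation_tendsto (t : ℝ) (ht : 0 < t) (f : ℝ → ℝ)
    (hf_cont : Continuous f) (hf_bdd : ∃ C : ℝ, ∀ x : ℝ, |f x| ≤ C) :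
    Tendsto (fun n : ℕ => ∫ x, f x ∂(gammaMeasure n ((n : ℝ) / t))) atTop (nhds (f t)) := by
  obtain ⟨C, hC⟩ := hf_bdd
  rw [← tendsto_add_atTop_iff_nat 1]
  have (n : ℕ) : IsProbabilityMeasure (gammaMeasure (n + 1 : ℕ) ((n + 1 : ℕ) / t)) :=
    isProbabilityMeasure_gammaMeasure (by positivity) (by positivity)
  exact tendsto_integral_of_tendsto_measure_le_dist
    (fun δ hδ => tendsto_gammaMeasure_le_dist ht hδ) hf_cont.measurable hf_cont.continuousAt hC
end

section
/- Let t > 0 and let m ≥ 2 be an integer. Then there exist real numbers c_1, …, c_{m−1} (depending on m and t but not on n) such that for every positive integer n the m-th central moment of the Gamma distribution with shape n and rate n/t satisfies ∫ (x − t)^m dΓ(n, n/t)(x) = Σ_{j=1}^{m−1} c_j n^{−j}. Moreover, for m = 1 one has ∫ (x − t) dΓ(n, n/t)(x) = 0 for every positive integer n. -/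
open MeasureTheory ProbabilityTheory

/-!
Multiplying the `Γ(a, r)` density by `x ^ k` gives `a (a + 1) ⋯ (a + k - 1) / r ^ k` times the
`Γ(a + k, r)` density, so the `k`-th moment of `Γ(a, r)` is that constant. For `r = a / t` it is
`t ^ k ∏_{i < k} (1 + i / a)`, a polynomial of degree `k - 1` in `1 / a`. Expanding `(x - t) ^ m`
binomially, the `m`-th central moment of `Γ(a, a / t)` is a polynomial of degree at most `m - 1`
in `1 / a`, whose constant term is `(t - t) ^ m = 0`.
-/

open Real Finset Polynomial

lemma Real.Gamma_add_natCast_eq_prod_mul {a : ℝ} (ha : 0 < a) (k : ℕ) :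
    Gamma (a + k) = (∏ i ∈ range k, (a + i)) * Gamma a := by
  induction k with
  | zero => simp
  | succ k ih =>
    rw [Nat.cast_succ, ← add_assoc, Gamma_add_one (by positivity), ih, prod_range_succ]
    ring

lemma Polynomial.eval_eq_sum_Icc_of_coeff_zero {R : Type*} [Semiring R] {p : R[X]} {d : ℕ}
    (hp : p.natDegree ≤ d) (h0 : p.coeff 0 = 0) (x : R) :
    p.eval x = ∑ j ∈ Icc 1 d, p.coeff j * x ^ j := by
  rw [eval_eq_sum_range' (Nat.lt_succ_of_le hp), sum_range_succ', h0, zero_mul, add_zero,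
    ← Ico_add_one_right_eq_Icc, sum_Ico_eq_sum_range]
  simp [add_comm]

namespace ProbabilityTheory

variable {a r : ℝ}

lemma gammaPDFReal_mul_pow (ha : 0 < a) (hr : 0 < r) (k : ℕ) (x : ℝ) :
    gammaPDFReal a r x * x ^ k =
      (∏ i ∈ range k, (a + i)) / r ^ k * gammaPDFReal (a + k) r x := by
  rcases Nat.eq_zero_or_pos k with rfl | hk
  · simp
  unfold gammaPDFReal
  split_ifs with hx
  · have hk' : (1 : ℝ) ≤ k := by exact_mod_cast hk
    rw [Gamma_add_natCast_eq_prod_mul ha, rpow_add hr, add_sub_right_comm,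
      rpow_add_natCast' hx (by linarith), rpow_natCast]
    have hGamma := (Gamma_pos_of_pos ha).ne'
    have hprod : ∏ i ∈ range k, (a + i) ≠ 0 := prod_ne_zero_iff.2 fun i _ => by positivity
    field_simp
  · simp

lemma measurable_gammaPDF (a r : ℝ) : Measurable (gammaPDF a r) :=
  (measurable_gammaPDFReal a r).ennreal_ofReal

lemma integral_gammaMeasure (ha : 0 < a) (hr : 0 < r) (g : ℝ → ℝ) :
    ∫ x, g x ∂gammaMeasure a r = ∫ x, gammaPDFReal a r x * g x := by
  rw [gammaMeasure, integral_withDensity_eq_integral_toReal_smul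
    (measurable_gammaPDF a r) (ae_of_all _ fun _ => ENNReal.ofReal_lt_top)]
  simp only [gammaPDF, ENNReal.toReal_ofReal (gammaPDFReal_nonneg ha hr _), smul_eq_mul]

lemma integrable_gammaMeasure_iff (ha : 0 < a) (hr : 0 < r) {g : ℝ → ℝ} :
    Integrable g (gammaMeasure a r) ↔ Integrable fun x => gammaPDFReal a r x * g x := by
  rw [gammaMeasure, integrable_withDensity_iff_integrable_smul'
    (measurable_gammaPDF a r) (ae_of_all _ fun _ => ENNReal.ofReal_lt_top)]
  simp only [gammaPDF, ENNReal.toReal_ofReal (gammaPDFReal_nonneg ha hr _), smul_eq_mul]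

lemma integrable_gammaPDFReal (ha : 0 < a) (hr : 0 < r) : Integrable (gammaPDFReal a r) := by
  have := isProbabilityMeasure_gammaMeasure ha hr
  simpa using (integrable_gammaMeasure_iff ha hr).1 (integrable_const (1 : ℝ))

lemma integral_gammaPDFReal (ha : 0 < a) (hr : 0 < r) : ∫ x, gammaPDFReal a r x = 1 := by
  have := isProbabilityMeasure_gammaMeasure ha hr
  simpa using (integral_gammaMeasure ha hr fun _ => 1).symm

lemma integrable_pow_gammaMeasure (ha : 0 < a) (hr : 0 < r) (k : ℕ) :
    Integrable (fun x => x ^ k) (gammaMeasure a r) := by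
  simp only [integrable_gammaMeasure_iff ha hr, gammaPDFReal_mul_pow ha hr]
  exact (integrable_gammaPDFReal (by positivity) hr).const_mul _

lemma integral_pow_gammaMeasure (ha : 0 < a) (hr : 0 < r) (k : ℕ) :
    ∫ x, x ^ k ∂gammaMeasure a r = (∏ i ∈ range k, (a + i)) / r ^ k := by
  simp only [integral_gammaMeasure ha hr, gammaPDFReal_mul_pow ha hr, integral_const_mul,
    integral_gammaPDFReal (by positivity : 0 < a + k) hr, mul_one]

lemma integral_pow_gammaMeasure_div (ha : 0 < a) {t : ℝ} (ht : 0 < t) (k : ℕ) :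
    ∫ x, x ^ k ∂gammaMeasure a (a / t) = t ^ k * ∏ i ∈ range k, (1 + i * a⁻¹) := by
  have hfactor : ∏ i ∈ range k, (a + i) = a ^ k * ∏ i ∈ range k, (1 + i * a⁻¹) := by
    rw [← card_range k, ← prod_const, card_range, ← prod_mul_distrib]
    exact prod_congr rfl fun i _ => by field_simp
  rw [integral_pow_gammaMeasure ha (by positivity), hfactor, div_pow]
  field_simp

/-- The `k`-th moment of `Γ(a, a / t)` is `t ^ k` times the value of this polynomial at `a⁻¹`. -/
noncomputable def gammaMomentPoly (k : ℕ) : ℝ[X] := ∏ i ∈ range k, (1 + C (i : ℝ) * X)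

lemma eval_gammaMomentPoly (k : ℕ) (u : ℝ) :
    (gammaMomentPoly k).eval u = ∏ i ∈ range k, (1 + i * u) := by
  simp [gammaMomentPoly, eval_prod]

lemma natDegree_gammaMomentPoly_le (k : ℕ) : (gammaMomentPoly k).natDegree ≤ k - 1 := by
  cases k with
  | zero => simp [gammaMomentPoly]
  | succ j =>
    rw [gammaMomentPoly, prod_range_succ']
    simp only [Nat.cast_zero, map_zero, zero_mul, add_zero, mul_one, add_tsub_cancel_right]
    refine (natDegree_prod_le _ _).trans <|
      (sum_le_sum fun i _ => ?_).trans (b := ∑ _i ∈ range j, 1) (by simp)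
    exact natDegree_add_le_of_degree_le (by simp) ((natDegree_C_mul_le _ _).trans (by simp))

noncomputable def gammaCentralMomentPoly (m : ℕ) (t : ℝ) : ℝ[X] :=
  ∑ k ∈ range (m + 1), C (t ^ k * (-t) ^ (m - k) * m.choose k) * gammaMomentPoly k

lemma natDegree_gammaCentralMomentPoly_le (m : ℕ) (t : ℝ) :
    (gammaCentralMomentPoly m t).natDegree ≤ m - 1 :=
  natDegree_sum_le_of_forall_le _ _ fun k hk =>
    (natDegree_C_mul_le _ _).trans <| (natDegree_gammaMomentPoly_le k).trans <|
      Nat.sub_le_sub_right (Nat.lt_succ_iff.1 (mem_range.1 hk)) 1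

lemma coeff_zero_gammaCentralMomentPoly {m : ℕ} (hm : m ≠ 0) (t : ℝ) :
    (gammaCentralMomentPoly m t).coeff 0 = 0 := by
  simp [coeff_zero_eq_eval_zero, gammaCentralMomentPoly, eval_finsetSum, eval_gammaMomentPoly,
    ← add_pow, hm]

lemma integral_sub_pow_gammaMeasure {t : ℝ} (ha : 0 < a) (ht : 0 < t) (m : ℕ) :
    ∫ x, (x - t) ^ m ∂gammaMeasure a (a / t) = (gammaCentralMomentPoly m t).eval a⁻¹ := by
  simp_rw [sub_eq_add_neg, add_pow]
  rw [integral_finsetSum _ fun k _ =>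
      (integrable_pow_gammaMeasure ha (by positivity) k).mul_const _ |>.mul_const _,
    gammaCentralMomentPoly, eval_finsetSum]
  refine sum_congr rfl fun k _ => ?_
  rw [integral_mul_const, integral_mul_const, integral_pow_gammaMeasure_div ha ht, eval_mul,
    eval_C, eval_gammaMomentPoly]
  ring

end ProbabilityTheory

/-- For `t > 0` and an integer `m ≥ 2`, there are constants `c_1, …, c_{m-1}` (independent
of `n`) such that the `m`-th central moment of the Gamma distribution with shape `n` and
rate `n / t` equals `∑_{j=1}^{m-1} c_j n^{-j}` for every positive integer `n`; moreover the
first central moment vanishes for every positive integer `n`. -/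
theorem gamma_central_moment_expansion (t : ℝ) (ht : 0 < t) (m : ℕ) (hm : 2 ≤ m) :
    (∃ c : ℕ → ℝ, ∀ n : ℕ, 0 < n →
        ∫ x, (x - t) ^ m ∂(gammaMeasure n ((n : ℝ) / t)) =
          ∑ j ∈ Finset.Icc 1 (m - 1), c j * (n : ℝ) ^ (-(j : ℤ))) ∧
      ∀ n : ℕ, 0 < n → ∫ x, (x - t) ∂(gammaMeasure n ((n : ℝ) / t)) = 0 := by
  refine ⟨⟨(gammaCentralMomentPoly m t).coeff, fun n hn => ?_⟩, fun n hn => ?_⟩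
  · rw [integral_sub_pow_gammaMeasure (Nat.cast_pos.2 hn) ht, eval_eq_sum_Icc_of_coeff_zero
      (natDegree_gammaCentralMomentPoly_le m t) (coeff_zero_gammaCentralMomentPoly (by omega) t)]
    simp [zpow_neg, inv_pow]
  · simpa [eval_eq_sum_Icc_of_coeff_zero (natDegree_gammaCentralMomentPoly_le 1 t)
      (coeff_zero_gammaCentralMomentPoly one_ne_zero t)] using
      integral_sub_pow_gammaMeasure (Nat.cast_pos.2 hn) ht 1
end
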